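/- Let L be a Lie algebra over a commutative ring and let I_1, …, I_n be Lie ideals of L with n ≥ 2. Let (i_1, …, i_p) and (j_1, …, j_q) be sequences of integers in {1, …, n} such that {i_1, …, i_p} ∪ {j_1, …, j_q} = {1, 2, …, n}. Then [[[I_{i_1}, I_{i_2}], …, I_{i_p}], [[I_{j_1}, I_{j_2}], …, I_{j_q}]] ≤ [[I_1, I_2], …, I_n]_S. -/

import Mathlib

/-- Bracket arrangements of weight `t`: `β¹(a₁) = a₁` and every bracket arrangement of
weight `t ≥ 2` has the form `βᵗ(a₁, …, a_t) = [βᵖ(a₁, …, a_p), β^{t-p}(a_{p+1}, …, a_t)]`. -/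
inductive BracketArr : ℕ → Type
  | leaf : BracketArr 1
  | node {p q : ℕ} : BracketArr p → BracketArr q → BracketArr (p + q)

/-- Evaluation of a bracket arrangement of weight `t` on a `t`-tuple of elements
of a Lie ring. -/
def BracketArr.eval {L : Type*} [LieRing L] : ∀ {t : ℕ}, BracketArr t → (Fin t → L) → L
  | _, .leaf, a => a 0
  | _, .node u v, a =>
      ⁅u.eval (fun i => a (Fin.castAdd _ i)), v.eval (fun i => a (Fin.natAdd _ i))⁆

/-- The left-normed bracket of a list of Lie ideals,
`[[⋯[[I₁, I₂], I₃], …], I_m]` (with junk value `⊥` for the empty list). -/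
def lnbIdeal {R : Type*} [CommRing R] {L : Type*} [LieRing L] [LieAlgebra R L] :
    List (LieIdeal R L) → LieIdeal R L
  | [] => ⊥
  | I :: Is => Is.foldl (fun acc J => ⁅acc, J⁆) I

/-- The symmetric bracket sum `[[I₁, I₂], …, I_n]_S = Σ_{σ ∈ Σ_n}
[[I_{σ(1)}, I_{σ(2)}], …, I_{σ(n)}]` of a family of Lie ideals. -/
def symBracketSum {R : Type*} [CommRing R] {L : Type*} [LieRing L] [LieAlgebra R L]
    {n : ℕ} (I : Fin n → LieIdeal R L) : LieIdeal R L :=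
  ⨆ σ : Equiv.Perm (Fin n), lnbIdeal (List.ofFn (fun s => I (σ s)))

/-- The fat bracket sum `[[I₁, I₂, …, I_n]]`: the Lie ideal generated by all elements
`βᵗ(a_{i₁}, …, a_{i_t})`, where `t ≥ n`, `βᵗ` is a bracket arrangement of weight `t`,
every integer in `{1, …, n}` occurs among the indices `i₁, …, i_t`, and `a_{i_s} ∈ I_{i_s}`. -/
def fatBracketSum {R : Type*} [CommRing R] {L : Type*} [LieRing L] [LieAlgebra R L]
    {n : ℕ} (I : Fin n → LieIdeal R L) : LieIdeal R L :=
  LieSubmodule.lieSpan R L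
    {x : L | ∃ t : ℕ, n ≤ t ∧ ∃ β : BracketArr t, ∃ idx : Fin t → Fin n,
      Function.Surjective idx ∧ ∃ a : Fin t → L,
        (∀ s : Fin t, a s ∈ I (idx s)) ∧ x = β.eval a}

/-!
Expanding `[X, [Y, Z]]` by the Jacobi identity shows, by induction on the length of `K`, that
`[X, [K₁, …, K_m]]` lies in the sum of the left-normed brackets `[X, K_{τ(1)}, …, K_{τ(m)}]` over
all permutations `τ`. Taking `X = [I_{i₁}, …, I_{i_p}]` turns each of these into a left-normed
bracket whose entries cover every `I_k`. Deleting repeated entries only enlarges a left-normed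
bracket, and what is left is `[I_{σ(1)}, …, I_{σ(n)}]` for a permutation `σ`.
-/

section

variable {R : Type*} [CommRing R] {L : Type*} [LieRing L] [LieAlgebra R L]

namespace LieIdeal

def lieResidual (J T : LieIdeal R L) : LieIdeal R L where
  carrier := {x | ∀ m ∈ J, ⁅x, m⁆ ∈ T}
  add_mem' ha hb m hm := by rw [add_lie]; exact add_mem (ha m hm) (hb m hm)
  zero_mem' m _ := by rw [zero_lie]; exact zero_mem T
  smul_mem' c _ ha m hm := by rw [smul_lie]; exact T.smul_mem c (ha m hm)
  lie_mem {x _} ha m hm := by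
    rw [lie_lie]
    exact sub_mem (T.lie_mem (ha m hm)) (ha _ (J.lie_mem hm))

theorem lie_le_iff_le_lieResidual {A J T : LieIdeal R L} : ⁅A, J⁆ ≤ T ↔ A ≤ lieResidual J T :=
  LieSubmodule.lie_le_iff _ _ _

theorem lie_lie_le_sup (X Y Z : LieIdeal R L) :
    ⁅X, ⁅Y, Z⁆⁆ ≤ ⁅⁅X, Y⁆, Z⁆ ⊔ ⁅⁅X, Z⁆, Y⁆ := by
  rw [LieSubmodule.lie_comm, lie_le_iff_le_lieResidual, LieSubmodule.lie_le_iff]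
  intro y hy z hz x hx
  have hxy : ⁅z, ⁅x, y⁆⁆ ∈ ⁅⁅X, Y⁆, Z⁆ := by
    rw [← lie_skew]; exact neg_mem (LieSubmodule.lie_mem_lie (LieSubmodule.lie_mem_lie hx hy) hz)
  have hxz : ⁅y, ⁅x, z⁆⁆ ∈ ⁅⁅X, Z⁆, Y⁆ := by
    rw [← lie_skew]; exact neg_mem (LieSubmodule.lie_mem_lie (LieSubmodule.lie_mem_lie hx hz) hy)
  have jacobi : ⁅⁅y, z⁆, x⁆ = ⁅z, ⁅x, y⁆⁆ - ⁅y, ⁅x, z⁆⁆ := by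
    rw [lie_lie, ← lie_skew x z, ← lie_skew x y, lie_neg, lie_neg, sub_neg_eq_add, neg_add_eq_sub]
  rw [jacobi]
  exact sub_mem (Submodule.mem_sup_left hxy) (Submodule.mem_sup_right hxz)

end LieIdeal

open LieIdeal

theorem lnbIdeal_cons_mono {X Y : LieIdeal R L} (h : X ≤ Y) (Ls : List (LieIdeal R L)) :
    lnbIdeal (X :: Ls) ≤ lnbIdeal (Y :: Ls) := by
  induction Ls generalizing X Y with
  | nil => exact h
  | cons J Ls ih => exact ih (LieSubmodule.mono_lie_left J h)

theorem lnbIdeal_cons_le (X : LieIdeal R L) {Ls : List (LieIdeal R L)} (hLs : Ls ≠ []) :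
    lnbIdeal (X :: Ls) ≤ lnbIdeal Ls := by
  obtain ⟨J, Ls, rfl⟩ := List.exists_cons_of_ne_nil hLs
  exact lnbIdeal_cons_mono (LieSubmodule.lie_le_right J X) Ls

theorem lnbIdeal_cons_le_of_sublist {Ks Ls : List (LieIdeal R L)} (h : Ls.Sublist Ks)
    (X : LieIdeal R L) : lnbIdeal (X :: Ks) ≤ lnbIdeal (X :: Ls) := by
  induction h generalizing X with
  | slnil => exact le_rfl
  | cons J _ ih => exact (ih ⁅X, J⁆).trans (lnbIdeal_cons_mono (LieSubmodule.lie_le_left X J) _)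
  | cons_cons J _ ih => exact ih ⁅X, J⁆

theorem lnbIdeal_le_of_sublist {Ks Ls : List (LieIdeal R L)} (h : Ls.Sublist Ks) (hLs : Ls ≠ []) :
    lnbIdeal Ks ≤ lnbIdeal Ls := by
  induction h with
  | slnil => exact le_rfl
  | cons J h ih =>
    refine (lnbIdeal_cons_le J ?_).trans (ih hLs)
    rintro rfl
    exact hLs (List.sublist_nil.mp h)
  | cons_cons J h => exact lnbIdeal_cons_le_of_sublist h J

theorem lnbIdeal_append {Ks : List (LieIdeal R L)} (hKs : Ks ≠ []) (Ls : List (LieIdeal R L)) :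
    lnbIdeal (Ks ++ Ls) = lnbIdeal (lnbIdeal Ks :: Ls) := by
  obtain ⟨K, Ks, rfl⟩ := List.exists_cons_of_ne_nil hKs
  simp [lnbIdeal, List.foldl_append]

theorem lie_lnbIdeal_le_of_forall_perm {ι : Type*} (I : ι → LieIdeal R L) (ks : List ι)
    (X T : LieIdeal R L) (hT : ∀ ms : List ι, ms.Perm ks → lnbIdeal (X :: ms.map I) ≤ T) :
    ⁅X, lnbIdeal (ks.map I)⁆ ≤ T := by
  induction ks using List.reverseRecOn generalizing X T with
  | nil => simp [lnbIdeal]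
  | append_singleton ks k ih =>
    rcases eq_or_ne ks [] with rfl | hks
    · exact hT [k] (List.Perm.refl _)
    rw [List.map_append, List.map_singleton, lnbIdeal_append (by simpa using hks)]
    refine (lie_lie_le_sup _ _ _).trans (sup_le ?_ ?_)
    · rw [lie_le_iff_le_lieResidual]
      refine ih X _ fun ms hms => ?_
      have h := hT (ms ++ [k]) (hms.append_right [k])
      rw [List.map_append, ← List.cons_append, lnbIdeal_append (List.cons_ne_nil _ _)] at h
      exact lie_le_iff_le_lieResidual.mp h
    · exact ih ⁅X, I k⁆ T fun ms hms =>
        hT (k :: ms) ((List.perm_append_singleton k ms).symm.trans (hms.append_right [k]))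

theorem exists_perm_ofFn_eq {n : ℕ} {l : List (Fin n)} (hl : l.Nodup) (hmem : ∀ i, i ∈ l) :
    ∃ σ : Equiv.Perm (Fin n), List.ofFn σ = l := by
  let e := hl.getEquivOfForallMemList l hmem
  have hlen : l.length = n := by simpa using Fintype.card_congr e
  refine ⟨(finCongr hlen.symm).trans e, List.ext_get (by simp [hlen]) fun i _ _ => ?_⟩
  simp [e]

theorem lnbIdeal_map_le_symBracketSum {n : ℕ} (I : Fin n → LieIdeal R L) {ks : List (Fin n)}
    (hks : ∀ i, i ∈ ks) : lnbIdeal (ks.map I) ≤ symBracketSum I := by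
  classical
  rcases eq_or_ne ks [] with rfl | hne
  · exact bot_le
  obtain ⟨σ, hσ⟩ :=
    exists_perm_ofFn_eq (List.nodup_dedup ks) fun i => List.mem_dedup.mpr (hks i)
  calc lnbIdeal (ks.map I) ≤ lnbIdeal (ks.dedup.map I) :=
        lnbIdeal_le_of_sublist ((List.dedup_sublist ks).map I) (by simpa [List.dedup_eq_nil])
    _ = lnbIdeal (List.ofFn fun s => I (σ s)) := by rw [← hσ, List.map_ofFn]; rfl
    _ ≤ symBracketSum I :=
        le_iSup (fun τ : Equiv.Perm (Fin n) => lnbIdeal (List.ofFn fun s => I (τ s))) σ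

end

theorem bracket_lnb_lnb_le_symBracketSum_general {R : Type*} [CommRing R] {L : Type*} [LieRing L]
    [LieAlgebra R L] {n p q : ℕ}
    (I : Fin n → LieIdeal R L) (idx : Fin p → Fin n) (jdx : Fin q → Fin n)
    (hcover : Set.range idx ∪ Set.range jdx = Set.univ) :
    ⁅lnbIdeal (List.ofFn (fun s => I (idx s))), lnbIdeal (List.ofFn (fun s => I (jdx s)))⁆ ≤
      symBracketSum I := by
  rcases Nat.eq_zero_or_pos p with rfl | hp
  · simp [lnbIdeal]
  change ⁅lnbIdeal (List.ofFn (I ∘ idx)), lnbIdeal (List.ofFn (I ∘ jdx))⁆ ≤ _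
  rw [← List.map_ofFn, ← List.map_ofFn]
  refine lie_lnbIdeal_le_of_forall_perm I _ _ _ fun ms hms => ?_
  rw [← lnbIdeal_append (by simpa using hp.ne'), ← List.map_append]
  refine lnbIdeal_map_le_symBracketSum I fun i => ?_
  have hi : i ∈ Set.range idx ∪ Set.range jdx := hcover ▸ Set.mem_univ i
  simpa [hms.mem_iff, List.mem_ofFn] using hi

/-- **Statement 10.** Let `L` be a Lie algebra over a commutative ring and `I₁, …, I_n` Lie
ideals of `L` with `n ≥ 2`.  Let `(i₁, …, i_p)` and `(j₁, …, j_q)` (with `p, q ≥ 1`) be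
sequences of indices in `{1, …, n}` such that `{i₁, …, i_p} ∪ {j₁, …, j_q} = {1, …, n}`.
Then `[[[I_{i₁}, I_{i₂}], …, I_{i_p}], [[I_{j₁}, I_{j₂}], …, I_{j_q}]]
  ≤ [[I₁, I₂], …, I_n]_S`. -/
theorem bracket_lnb_lnb_le_symBracketSum {R : Type*} [CommRing R] {L : Type*} [LieRing L]
    [LieAlgebra R L] {n p q : ℕ} (hn : 2 ≤ n) (hp : 1 ≤ p) (hq : 1 ≤ q)
    (I : Fin n → LieIdeal R L) (idx : Fin p → Fin n) (jdx : Fin q → Fin n)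
    (hcover : Set.range idx ∪ Set.range jdx = Set.univ) :
    ⁅lnbIdeal (List.ofFn (fun s => I (idx s))), lnbIdeal (List.ofFn (fun s => I (jdx s)))⁆ ≤
      symBracketSum I :=
  bracket_lnb_lnb_le_symBracketSum_general I idx jdx hcover
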